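/- Let 0 < p, q ≤ ∞. Then the differentiation operator D f = f' is unbounded from the classical Fock space F_p to F_q: there is no constant C > 0 such that every entire function f with ‖f‖_{F_p} < ∞ satisfies ‖f'‖_{F_q} ≤ C‖f‖_{F_p}. -/

import Mathlib

/-!
The test functions `e^{tz}`, `t > 0`, defeat every constant. Completing the square,
`|e^{tz}| e^{-|z|²/2} = e^{t²/2} e^{-|z-t|²/2}`, so by translation invariance of Lebesgue measure
(or of the supremum) `‖e^{tz}‖_{F_p} = e^{t²/2} ‖1‖_{F_p}` with `0 < ‖1‖_{F_p} < ∞`. Since the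
derivative is `t e^{tz}`, a bound `‖f'‖_{F_q} ≤ C ‖f‖_{F_p}` would give
`t ‖1‖_{F_q} ≤ C ‖1‖_{F_p}` for all `t`.
-/

open MeasureTheory Filter Topology Metric
open scoped ENNReal

noncomputable section

/-- The radial extension of a weight `ψ : ℝ → ℝ` to the complex plane. -/
def rext (ψ : ℝ → ℝ) (z : ℂ) : ℝ := ψ (‖z‖)

/-- The Laplacian of the radial extension of `ψ`, via the radial formula
`Δψ(z) = ψ''(|z|) + ψ'(|z|)/|z|`. -/
def lapPsi (ψ : ℝ → ℝ) (z : ℂ) : ℝ :=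
  deriv (deriv ψ) (‖z‖) + deriv ψ (‖z‖) / ‖z‖

/-- The admissibility conditions imposed on the weight `ψ` and the associated function `τ`. -/
structure Admissible (ψ τ : ℝ → ℝ) : Prop where
  smooth : ContDiffOn ℝ 2 ψ (Set.Ici 0)
  nonneg : ∀ r : ℝ, 0 ≤ r → 0 ≤ ψ r
  lap_pos : ∀ z : ℂ, 0 < lapPsi ψ z
  fast : Tendsto (fun r => ψ r / r ^ 2) atTop atTop
  tau_pos : ∀ r : ℝ, 0 ≤ r → 0 < τ r
  tau_diff : ∀ r : ℝ, 0 ≤ r → DifferentiableAt ℝ τ r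
  tau_one : ∃ c₁ > (0:ℝ), ∃ c₂ > (0:ℝ), ∀ z : ℂ, ‖z‖ < 1 →
      c₁ ≤ τ (‖z‖) ∧ τ (‖z‖) ≤ c₂
  tau_lap : ∃ c₁ > (0:ℝ), ∃ c₂ > (0:ℝ), ∀ z : ℂ, 1 ≤ ‖z‖ →
      c₁ * lapPsi ψ z ^ (-(1:ℝ)/2) ≤ τ (‖z‖) ∧
      τ (‖z‖) ≤ c₂ * lapPsi ψ z ^ (-(1:ℝ)/2)
  tau_lim : Tendsto τ atTop (𝓝 0)
  tau_deriv_lim : Tendsto (deriv τ) atTop (𝓝 0)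
  tau_extra : (∃ C > (0:ℝ), ∃ r₀ : ℝ, ∀ r s : ℝ, r₀ ≤ r → r ≤ s → τ r * r ^ C ≤ τ s * s ^ C) ∨
      Tendsto (fun r => deriv τ r * Real.log (1 / τ r)) atTop (𝓝 0)

/-- The (extended-real-valued) norm of the generalized Fock space `F_p^ψ`, `0 < p ≤ ∞`. -/
def fockNorm (ψ : ℝ → ℝ) (p : ℝ≥0∞) (f : ℂ → ℂ) : ℝ≥0∞ :=
  if p = ∞ then ⨆ z : ℂ, ENNReal.ofReal (‖f z‖ * Real.exp (-(rext ψ z)))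
  else (∫⁻ z : ℂ, ENNReal.ofReal
      (‖f z‖ ^ p.toReal * Real.exp (-(p.toReal * rext ψ z)))) ^ (1 / p.toReal)

/-- The Volterra-type integral operator `V_g f (z) = ∫_0^z f(w) g'(w) dw`. -/
def Vop (g f : ℂ → ℂ) (z : ℂ) : ℂ :=
  z * ∫ t in (0:ℝ)..1, f ((t : ℂ) * z) * deriv g ((t : ℂ) * z)

/-- The Volterra companion integral operator `I_g f (z) = ∫_0^z f'(w) g(w) dw`. -/
def Iop (g f : ℂ → ℂ) (z : ℂ) : ℂ :=
  z * ∫ t in (0:ℝ)..1, deriv f ((t : ℂ) * z) * g ((t : ℂ) * z)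

/-- The multiplication operator `M_g f = g · f`. -/
def Mop (g f : ℂ → ℂ) (z : ℂ) : ℂ := g z * f z

/-- Boundedness of an operator from `F_p^ψ` to `F_q^ψ`. -/
def BoundedOp (ψ : ℝ → ℝ) (p q : ℝ≥0∞) (T : (ℂ → ℂ) → ℂ → ℂ) : Prop :=
  ∃ C > (0:ℝ), ∀ f : ℂ → ℂ, Differentiable ℂ f → fockNorm ψ p f < ∞ →
    fockNorm ψ q (T f) ≤ ENNReal.ofReal C * fockNorm ψ p f

/-- Compactness of an operator from `F_p^ψ` to `F_q^ψ`: `‖T f_n‖ → 0` for every uniformly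
norm-bounded sequence in `F_p^ψ` converging to `0` uniformly on compact subsets of `ℂ`. -/
def CompactOp (ψ : ℝ → ℝ) (p q : ℝ≥0∞) (T : (ℂ → ℂ) → ℂ → ℂ) : Prop :=
  ∀ F : ℕ → ℂ → ℂ, (∀ n, Differentiable ℂ (F n)) →
    (∃ M : ℝ≥0∞, M < ∞ ∧ ∀ n, fockNorm ψ p (F n) ≤ M) →
    (∀ K : Set ℂ, IsCompact K → TendstoUniformlyOn (fun n => F n) 0 atTop K) →
    Tendsto (fun n => fockNorm ψ q (T (F n))) atTop (𝓝 0)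

lemma fockNorm_of_ne_top (ψ : ℝ → ℝ) {p : ℝ≥0∞} (hp : p ≠ ∞) (f : ℂ → ℂ) :
    fockNorm ψ p f = (∫⁻ z : ℂ, ENNReal.ofReal
      ((‖f z‖ * Real.exp (-rext ψ z)) ^ p.toReal)) ^ (1 / p.toReal) := by
  rw [fockNorm, if_neg hp]
  congr with z
  rw [Real.mul_rpow (norm_nonneg _) (Real.exp_pos _).le, ← Real.exp_mul]
  ring_nf

theorem fockNorm_eq_ofReal_mul_of_weighted_eq {ψ : ℝ → ℝ} {p : ℝ≥0∞} (hp : p ≠ 0)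
    {f g : ℂ → ℂ} {c : ℝ} (hc : 0 ≤ c) (a : ℂ)
    (hfg : ∀ z, ‖f z‖ * Real.exp (-rext ψ z) =
      c * (‖g (z - a)‖ * Real.exp (-rext ψ (z - a)))) :
    fockNorm ψ p f = ENNReal.ofReal c * fockNorm ψ p g := by
  by_cases hpt : p = ∞
  · simp only [fockNorm, if_pos hpt, hfg, ENNReal.ofReal_mul hc, ← ENNReal.mul_iSup]
    congr 1
    exact (Equiv.subRight a).iSup_comp
      (g := fun z => ENNReal.ofReal (‖g z‖ * Real.exp (-rext ψ z)))
  · have hP : 0 < p.toReal := ENNReal.toReal_pos hp hpt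
    simp only [fockNorm_of_ne_top ψ hpt, hfg,
      Real.mul_rpow hc (mul_nonneg (norm_nonneg _) (Real.exp_pos _).le),
      ENNReal.ofReal_mul (Real.rpow_nonneg hc _)]
    rw [lintegral_const_mul' _ _ ENNReal.ofReal_ne_top,
      lintegral_sub_right_eq_self
        (fun z => ENNReal.ofReal ((‖g z‖ * Real.exp (-rext ψ z)) ^ p.toReal)) a,
      ENNReal.mul_rpow_of_nonneg _ _ (by positivity),
      ← ENNReal.ofReal_rpow_of_nonneg hc hP.le, ← ENNReal.rpow_mul,
      mul_one_div_cancel hP.ne', ENNReal.rpow_one]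

theorem fockNorm_const_mul (ψ : ℝ → ℝ) {p : ℝ≥0∞} (hp : p ≠ 0) (c : ℂ) (f : ℂ → ℂ) :
    fockNorm ψ p (fun z => c * f z) = ENNReal.ofReal ‖c‖ * fockNorm ψ p f :=
  fockNorm_eq_ofReal_mul_of_weighted_eq hp (norm_nonneg c) 0 fun z => by
    rw [sub_zero, norm_mul, mul_assoc]

theorem norm_cexp_ofReal_mul_mul_exp_neg_sq (t : ℝ) (z : ℂ) :
    ‖Complex.exp (t * z)‖ * Real.exp (-(‖z‖ ^ 2 / 2)) =
      Real.exp (t ^ 2 / 2) * Real.exp (-(‖z - t‖ ^ 2 / 2)) := by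
  simp only [Complex.norm_exp, ← Real.exp_add, Complex.sq_norm, Complex.normSq_apply,
    Complex.re_ofReal_mul, Complex.sub_re, Complex.sub_im, Complex.ofReal_re,
    Complex.ofReal_im]
  ring_nf

theorem fockNorm_gaussian_cexp_ofReal_mul {p : ℝ≥0∞} (hp : p ≠ 0) (t : ℝ) :
    fockNorm (fun r : ℝ => r ^ 2 / 2) p (fun z => Complex.exp (t * z)) =
      ENNReal.ofReal (Real.exp (t ^ 2 / 2)) * fockNorm (fun r : ℝ => r ^ 2 / 2) p 1 :=
  fockNorm_eq_ofReal_mul_of_weighted_eq hp (Real.exp_pos _).le t fun z => by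
    simpa [rext] using norm_cexp_ofReal_mul_mul_exp_neg_sq t z

theorem lintegral_ofReal_exp_neg_mul_sq_norm_complex {b : ℝ} (hb : 0 < b) :
    ∫⁻ z : ℂ, ENNReal.ofReal (Real.exp (-b * ‖z‖ ^ 2)) = ENNReal.ofReal (Real.pi / b) := by
  have hint : ∫ z : ℂ, Real.exp (-b * ‖z‖ ^ 2) = Real.pi / b := by
    rw [GaussianFourier.integral_rexp_neg_mul_sq_norm hb, Complex.finrank_real_complex]
    norm_num
  rw [← hint, ofReal_integral_eq_lintegral_ofReal
    (Integrable.of_integral_ne_zero (by rw [hint]; positivity))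
    (Eventually.of_forall fun z => (Real.exp_pos _).le)]

theorem fockNorm_gaussian_one_of_ne_top {p : ℝ≥0∞} (hp : p ≠ 0) (hpt : p ≠ ∞) :
    fockNorm (fun r : ℝ => r ^ 2 / 2) p 1 =
      ENNReal.ofReal (2 * Real.pi / p.toReal) ^ (1 / p.toReal) := by
  have hP : 0 < p.toReal := ENNReal.toReal_pos hp hpt
  have hweight : ∀ z : ℂ, (‖(1 : ℂ → ℂ) z‖ * Real.exp (-rext (fun r : ℝ => r ^ 2 / 2) z)) ^
      p.toReal = Real.exp (-(p.toReal / 2) * ‖z‖ ^ 2) := fun z => by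
    rw [Pi.one_apply, norm_one, one_mul, ← Real.exp_mul, rext]
    ring_nf
  rw [fockNorm_of_ne_top _ hpt, lintegral_congr fun z => congrArg ENNReal.ofReal (hweight z),
    lintegral_ofReal_exp_neg_mul_sq_norm_complex (half_pos hP)]
  congr 2
  field_simp

theorem fockNorm_gaussian_one_top : fockNorm (fun r : ℝ => r ^ 2 / 2) ∞ 1 = 1 := by
  simp only [fockNorm, if_pos, Pi.one_apply, norm_one, one_mul, rext]
  refine le_antisymm (iSup_le fun z => ?_) (le_iSup_of_le 0 (by simp))
  rw [ENNReal.ofReal_le_one, Real.exp_le_one_iff, neg_nonpos]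
  positivity

theorem fockNorm_gaussian_one_ne_zero {p : ℝ≥0∞} (hp : p ≠ 0) :
    fockNorm (fun r : ℝ => r ^ 2 / 2) p 1 ≠ 0 := by
  by_cases hpt : p = ∞
  · simp [hpt, fockNorm_gaussian_one_top]
  · have hP : 0 < p.toReal := ENNReal.toReal_pos hp hpt
    rw [fockNorm_gaussian_one_of_ne_top hp hpt]
    exact (ENNReal.rpow_pos (ENNReal.ofReal_pos.2 (by positivity)) ENNReal.ofReal_ne_top).ne'

theorem fockNorm_gaussian_one_ne_top {p : ℝ≥0∞} (hp : p ≠ 0) :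
    fockNorm (fun r : ℝ => r ^ 2 / 2) p 1 ≠ ∞ := by
  by_cases hpt : p = ∞
  · simp [hpt, fockNorm_gaussian_one_top]
  · rw [fockNorm_gaussian_one_of_ne_top hp hpt]
    exact ENNReal.rpow_ne_top_of_nonneg (by positivity) ENNReal.ofReal_ne_top

theorem deriv_cexp_ofReal_mul (t : ℝ) :
    deriv (fun z : ℂ => Complex.exp (t * z)) = fun z => t * Complex.exp (t * z) := by
  funext z
  rw [deriv_cexp (differentiableAt_id.const_mul _)]
  simp [mul_comm]

/-- for `0 < p, q ≤ ∞` the differentiation operator is unbounded from the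
classical Fock space `F_p` (weight `e^{-|z|²/2}`) to `F_q`. -/
theorem differentiation_unbounded_classical (p q : ℝ≥0∞) (hp : 0 < p) (hq : 0 < q) :
    ¬ ∃ C > (0:ℝ), ∀ f : ℂ → ℂ, Differentiable ℂ f →
        fockNorm (fun r => r ^ 2 / 2) p f < ∞ →
        fockNorm (fun r => r ^ 2 / 2) q (deriv f) ≤
          ENNReal.ofReal C * fockNorm (fun r => r ^ 2 / 2) p f := by
  rintro ⟨C, -, hC⟩
  obtain ⟨n, hn⟩ := ENNReal.exists_nat_mul_gt (fockNorm_gaussian_one_ne_zero hq.ne')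
    (ENNReal.mul_ne_top ENNReal.ofReal_ne_top (fockNorm_gaussian_one_ne_top hp.ne'))
  have hE : ENNReal.ofReal (Real.exp ((n : ℝ) ^ 2 / 2)) ≠ 0 := by simp [Real.exp_pos]
  have hbound := hC (fun z => Complex.exp ((n : ℝ) * z))
    (Complex.differentiable_exp.comp (differentiable_id.const_mul _))
    (by rw [fockNorm_gaussian_cexp_ofReal_mul hp.ne']
        exact ENNReal.mul_lt_top ENNReal.ofReal_lt_top
          (fockNorm_gaussian_one_ne_top hp.ne').lt_top)
  rw [deriv_cexp_ofReal_mul, fockNorm_const_mul _ hq.ne', fockNorm_gaussian_cexp_ofReal_mul hq.ne',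
    fockNorm_gaussian_cexp_ofReal_mul hp.ne', mul_left_comm, mul_left_comm (ENNReal.ofReal C),
    ENNReal.mul_le_mul_iff_right hE ENNReal.ofReal_ne_top, Complex.norm_real, Real.norm_natCast,
    ENNReal.ofReal_natCast] at hbound
  exact hn.not_ge hbound
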